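/- Hyper-objective identity for the NC-SC hard instance: let K ≥ 10 and T ≥ 2 be integers, ν ∈ (0,1] and r ≥ 1, and let (z*(x), y*(x)) be the unique minimizer of (z,y) ↦ ḡ^{sc}(x,z,y). Then for every x ∈ ℝ^T, f̄^{nc-sc}(x, z*(x), y*(x)) = f̄^{nc}_{ν,r}(K^{3/2} x), where f̄^{nc}_{ν,r}(u) := (√ν/2)(u_1 − 1)² + ½ Σ_{i=2}^T (u_i − u_{i−1})² + ν Σ_{i=1}^{T−1} Υ_r(u_i) for u ∈ ℝ^T. -/

import Mathlib

noncomputable section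
open scoped RealInnerProductSpace

/-- `ℝⁿ` with the Euclidean structure. -/
abbrev EV (n : ℕ) : Type := EuclideanSpace ℝ (Fin n)

/-- The space `ℝ^{K(T−1)}` of lower-level coupling variables, presented as
`(T−1)` blocks of size `K`; here the sizes are `K+1` and `T+2` so that the paper's
constraints `K ≥ 1`, `T ≥ 2` hold automatically. -/
abbrev EY (K T : ℕ) : Type := EuclideanSpace ℝ (Fin (T + 1) × Fin (K + 1))

/-- The nonconvex regularizer `Υ_r(x) := 120 ∫₁ˣ t²(t−1)/(1+(t/r)²) dt`. -/
def Upsilon (r x : ℝ) : ℝ := 120 * ∫ t in (1 : ℝ)..x, t ^ 2 * (t - 1) / (1 + (t / r) ^ 2)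

/-- The tridiagonal path-Laplacian matrix `A_K` (of size `K+1`). -/
def AK (K : ℕ) : Matrix (Fin (K + 1)) (Fin (K + 1)) ℝ := fun i j =>
  if i = j then (if i.1 = 0 ∨ i.1 = K then 1 else 2)
  else if i.1 + 1 = j.1 ∨ j.1 + 1 = i.1 then -1 else 0

/-- `B = (K^{−2} I + A_K)⁻¹` (size `K+1`). -/
def BK (K : ℕ) : Matrix (Fin (K + 1)) (Fin (K + 1)) ℝ :=
  (((K + 1 : ℝ))⁻¹ ^ 2 • (1 : Matrix (Fin (K + 1)) (Fin (K + 1)) ℝ) + AK K)⁻¹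

/-- `a_K = (1/K)(1 − B_{1,1}/B_{1,K})`. -/
def aK (K : ℕ) : ℝ := (1 / (K + 1 : ℝ)) * (1 - BK K 0 0 / BK K 0 (Fin.last K))

/-- `b_K = K / B_{1,K}`. -/
def bK (K : ℕ) : ℝ := (K + 1 : ℝ) / BK K 0 (Fin.last K)

/-- The upper-level coupling term
`h(z,y) = Σ_{i=1}^{T−1} [(a_K/2)(z_i² + z_{i+1}²) + (b_K/2)(z_i y^{(i)}_1 − z_{i+1} y^{(i)}_K)]`. -/
def hfun (K T : ℕ) (z : EV (T + 2)) (y : EY K T) : ℝ :=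
  ∑ i : Fin (T + 1),
    ((aK K / 2) * ((z i.castSucc) ^ 2 + (z i.succ) ^ 2)
      + (bK K / 2) * (z i.castSucc * y (i, 0) - z i.succ * y (i, Fin.last K)))

/-- The strongly convex sub-chain
`h^{sc}(u,v,w) = ½ Σ_{j<K} (w_j − w_{j+1})² + ‖w‖²/(2K²) − (u w_1 − v w_K)`. -/
def hsc (K : ℕ) (u v : ℝ) (w : EV (K + 1)) : ℝ :=
  (1 / 2) * ∑ j : Fin K, (w j.castSucc - w j.succ) ^ 2
    + (1 / (2 * ((K + 1 : ℝ)) ^ 2)) * ‖w‖ ^ 2 - (u * w 0 - v * w (Fin.last K))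

/-- The lower-level hard instance
`ḡ^{sc}(x,z,y) = ‖z‖²/(2K²) − ⟨x,z⟩ + Σ_{i=1}^{T−1} h^{sc}(x_i, x_{i+1}, y^{(i)})`. -/
def gbar (K T : ℕ) (x z : EV (T + 2)) (y : EY K T) : ℝ :=
  (1 / (2 * ((K + 1 : ℝ)) ^ 2)) * ‖z‖ ^ 2 - ⟪x, z⟫
    + ∑ i : Fin (T + 1), hsc K (x i.castSucc) (x i.succ) (WithLp.toLp 2 (fun j => y (i, j)))

/-- The upper-level hard instance
`f̄^{nc-sc}(x,z,y) = (√ν/2)(z₁/√K − 1)² + ν Σ_{i=1}^{T−1} Υ_r(z_i/√K) + h(z,y)`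
(it does not depend on `x`). -/
def fbar (K T : ℕ) (ν r : ℝ) (z : EV (T + 2)) (y : EY K T) : ℝ :=
  (Real.sqrt ν / 2) * (z 0 / Real.sqrt (K + 1) - 1) ^ 2
    + ν * ∑ i : Fin (T + 1), Upsilon r (z i.castSucc / Real.sqrt (K + 1))
    + hfun K T z y

/-- The nonconvex zero-chain
`f̄^{nc}_{ν,r}(u) = (√ν/2)(u₁−1)² + ½ Σ_{i=2}^T (u_i − u_{i−1})² + ν Σ_{i=1}^{T−1} Υ_r(u_i)`
on `ℝ^{T'+2}`. -/
def fnc (T' : ℕ) (ν r : ℝ) : EV (T' + 2) → ℝ := fun u =>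
  (Real.sqrt ν / 2) * (u 0 - 1) ^ 2
    + (1 / 2) * ∑ i : Fin (T' + 1), (u i.succ - u i.castSucc) ^ 2
    + ν * ∑ i : Fin (T' + 1), Upsilon r (u i.castSucc)

/-! The lower-level objective splits into strictly convex quadratics: `‖z‖²/(2K²) - ⟪x, z⟫` is
minimised at `z = K² x`, and each block `h^{sc}(x_i, x_{i+1}, ·)` at `w = B (x_i e₁ - x_{i+1} e_K)`,
since `K⁻² I + A_K = K⁻² I + DᵀD` (`D` the difference matrix of the path) is positive definite.
As `B` is symmetric and invariant under reversal of the indices, `w₁ = B₁₁ x_i - B₁_K x_{i+1}` and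
`w_K = B₁_K x_i - B₁₁ x_{i+1}`, and `a_K`, `b_K` are exactly the constants that turn each summand
of `h` at this point into `(K³/2)(x_{i+1} - x_i)²`. This needs `B₁_K ≠ 0`: a solution of
`(K⁻² I + A_K) w = e_K` with `w₁ = 0` would vanish, by forward recursion along the first `K - 1`
rows. -/

open Matrix Finset

theorem quadratic_eq_add_of_mulVec_eq {n : Type*} [Fintype n] {M : Matrix n n ℝ} (hM : M.IsSymm)
    {w₀ b : n → ℝ} (h : M *ᵥ w₀ = b) (w : n → ℝ) :
    w ⬝ᵥ M *ᵥ w / 2 - b ⬝ᵥ w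
      = w₀ ⬝ᵥ M *ᵥ w₀ / 2 - b ⬝ᵥ w₀ + (w - w₀) ⬝ᵥ M *ᵥ (w - w₀) / 2 := by
  subst h
  have hs : w₀ ⬝ᵥ M *ᵥ w = w ⬝ᵥ M *ᵥ w₀ := by
    rw [dotProduct_mulVec, ← mulVec_transpose, hM.eq, dotProduct_comm]
  simp only [mulVec_sub, dotProduct_sub, sub_dotProduct]
  rw [dotProduct_comm (M *ᵥ w₀) w, dotProduct_comm (M *ᵥ w₀) w₀, hs]
  ring

theorem norm_sq_div_sub_inner_eq_add {E : Type*} [NormedAddCommGroup E] [InnerProductSpace ℝ E]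
    {c : ℝ} (hc : c ≠ 0) (x z : E) :
    ‖z‖ ^ 2 / (2 * c) - ⟪x, z⟫
      = ‖c • x‖ ^ 2 / (2 * c) - ⟪x, c • x⟫ + ‖z - c • x‖ ^ 2 / (2 * c) := by
  rw [norm_sub_sq_real, norm_smul, inner_smul_right, inner_smul_right, real_inner_self_eq_norm_sq,
    real_inner_comm, Real.norm_eq_abs, mul_pow, sq_abs]
  field_simp
  ring

def pathDiff (K : ℕ) : Matrix (Fin (K + 1)) (Fin (K + 2)) ℝ :=
  fun j => Pi.single j.castSucc 1 - Pi.single j.succ 1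

lemma pathDiff_mulVec (K : ℕ) (v : Fin (K + 2) → ℝ) (j : Fin (K + 1)) :
    (pathDiff K *ᵥ v) j = v j.castSucc - v j.succ := by
  change (Pi.single j.castSucc 1 - Pi.single j.succ 1) ⬝ᵥ v = _
  rw [sub_dotProduct, single_dotProduct, single_dotProduct, one_mul, one_mul]

lemma sum_range_incidence_mul (n a b : ℕ) :
    ∑ x ∈ range (n + 1), ((if a = x then (1 : ℝ) else 0) - if a = x + 1 then 1 else 0) *
        ((if b = x then 1 else 0) - if b = x + 1 then 1 else 0) =
      if a = b then (if a = 0 ∨ a = n + 1 then 1 else if a ≤ n then 2 else 0)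
      else if a + 1 = b ∨ b + 1 = a then (if a ≤ n + 1 ∧ b ≤ n + 1 then -1 else 0) else 0 := by
  induction n with
  | zero =>
    simp only [zero_add, range_one, sum_singleton, nonpos_iff_eq_zero]
    split_ifs <;> first | omega | norm_num
  | succ n ih =>
    rw [sum_range_succ, ih]
    split_ifs <;> first | omega | norm_num

-- `AK 0 = !![1]` is not a path Laplacian, so this only holds from size two on.
lemma AK_succ_eq_transpose_mul (K : ℕ) : AK (K + 1) = (pathDiff K)ᵀ * pathDiff K := by
  ext i k
  simp only [mul_apply, transpose_apply, pathDiff, Pi.sub_apply, Pi.single_apply, AK, Fin.ext_iff,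
    Fin.val_castSucc, Fin.val_succ]
  rw [Fin.sum_univ_eq_sum_range (fun x => ((if (i : ℕ) = x then (1 : ℝ) else 0) -
      if (i : ℕ) = x + 1 then 1 else 0) * ((if (k : ℕ) = x then 1 else 0) -
      if (k : ℕ) = x + 1 then 1 else 0)), sum_range_incidence_mul]
  have := i.2; have := k.2
  split_ifs <;> first | omega | norm_num

lemma AK_rev (K : ℕ) (i j : Fin (K + 1)) : AK K i.rev j.rev = AK K i j := by
  have := i.2; have := j.2
  simp only [AK, Fin.ext_iff, Fin.val_rev]
  split_ifs <;> first | rfl | omega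

def MK (K : ℕ) : Matrix (Fin (K + 1)) (Fin (K + 1)) ℝ := ((K + 1 : ℝ))⁻¹ ^ 2 • 1 + AK K

lemma BK_eq_inv (K : ℕ) : BK K = (MK K)⁻¹ := rfl

lemma MK_mulVec (K : ℕ) (v : Fin (K + 2) → ℝ) :
    MK (K + 1) *ᵥ v = ((K + 2 : ℝ))⁻¹ ^ 2 • v + (pathDiff K)ᵀ *ᵥ (pathDiff K *ᵥ v) := by
  rw [MK, add_mulVec, smul_mulVec, one_mulVec, AK_succ_eq_transpose_mul, ← mulVec_mulVec]
  push_cast; ring_nf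

lemma dotProduct_MK_mulVec (K : ℕ) (v w : Fin (K + 2) → ℝ) :
    v ⬝ᵥ MK (K + 1) *ᵥ w
      = ((K + 2 : ℝ))⁻¹ ^ 2 * (v ⬝ᵥ w) + (pathDiff K *ᵥ v) ⬝ᵥ (pathDiff K *ᵥ w) := by
  rw [MK_mulVec, dotProduct_add, dotProduct_smul, smul_eq_mul, dotProduct_mulVec, vecMul_transpose]

lemma posDef_MK (K : ℕ) : (MK (K + 1)).PosDef := by
  refine (PosDef.one.smul (by positivity)).add_posSemidef ?_
  simpa [AK_succ_eq_transpose_mul] using posSemidef_conjTranspose_mul_self (pathDiff K)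

lemma isSymm_MK (K : ℕ) : (MK (K + 1)).IsSymm :=
  isHermitian_iff_isSymm.mp (posDef_MK K).isHermitian

lemma MK_mul_BK (K : ℕ) : MK (K + 1) * BK (K + 1) = 1 :=
  mul_nonsing_inv _ ((isUnit_iff_isUnit_det _).mp (posDef_MK K).isUnit)

lemma BK_comm (K : ℕ) (i j : Fin (K + 2)) : BK (K + 1) i j = BK (K + 1) j i := by
  simpa [BK_eq_inv] using ((posDef_MK K).isHermitian.inv.apply i j).symm

lemma BK_rev (K : ℕ) (i j : Fin (K + 1)) : BK K i.rev j.rev = BK K i j := by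
  have hM : (MK K).submatrix Fin.revPerm Fin.revPerm = MK K := by
    ext i j
    simp [MK, one_apply, AK_rev]
  have := congrFun₂ (inv_submatrix_equiv (MK K) Fin.revPerm Fin.revPerm) i j
  rw [hM, ← BK_eq_inv] at this
  exact this.symm

lemma eq_zero_of_MK_mulVec_castSucc (K : ℕ) (w : Fin (K + 2) → ℝ)
    (hw : ∀ i : Fin (K + 1), (MK (K + 1) *ᵥ w) i.castSucc = 0) (h0 : w 0 = 0) : w = 0 := by
  suffices h : ∀ i : Fin (K + 2), ∀ t ≤ i, w t = 0 from funext fun t => h t t le_rfl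
  intro i
  induction i using Fin.induction with
  | zero => intro t ht; rwa [Fin.le_zero_iff.mp ht]
  | succ i ih =>
    -- Against the indicator of `{t ≤ i}` the Laplacian telescopes to `w i - w (i + 1)`.
    set p : Fin (K + 2) → ℝ := fun t => if t ≤ i.castSucc then 1 else 0
    have hDp : pathDiff K *ᵥ p = Pi.single i 1 := by
      funext j
      simp only [pathDiff_mulVec, p, Pi.single_apply, Fin.le_def, Fin.ext_iff, Fin.val_castSucc,
        Fin.val_succ]
      split_ifs <;> first | omega | norm_num
    have hpw : p ⬝ᵥ w = 0 := sum_eq_zero fun t _ => by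
      by_cases ht : t ≤ i.castSucc <;> simp [p, ht, ih t]
    have hpMw : p ⬝ᵥ MK (K + 1) *ᵥ w = 0 := sum_eq_zero fun t _ => by
      by_cases ht : t ≤ i.castSucc
      · obtain ⟨s, rfl⟩ := Fin.exists_castSucc_eq.mpr (ht.trans_lt (Fin.castSucc_lt_last i)).ne
        rw [hw, mul_zero]
      · simp [p, ht]
    rw [dotProduct_MK_mulVec, hpw, hDp, single_dotProduct, pathDiff_mulVec, ih _ le_rfl] at hpMw
    intro t ht
    rcases ht.lt_or_eq with ht | rfl
    · exact ih t (Fin.le_castSucc_iff.mpr ht)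
    · linarith

lemma BK_zero_last_ne_zero (K : ℕ) : BK (K + 1) 0 (Fin.last (K + 1)) ≠ 0 := by
  intro h
  set w : Fin (K + 2) → ℝ := fun t => BK (K + 1) t (Fin.last (K + 1))
  have hMw (t) :
      (MK (K + 1) *ᵥ w) t = (1 : Matrix (Fin (K + 2)) (Fin (K + 2)) ℝ) t (Fin.last _) := by
    rw [← MK_mul_BK K]; rfl
  have hw0 : w = 0 := eq_zero_of_MK_mulVec_castSucc K w
    (fun i => by rw [hMw, one_apply_ne (Fin.castSucc_lt_last i).ne]) h
  simpa [hw0] using hMw (Fin.last _)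

def endLoad (K : ℕ) (u v : ℝ) : Fin (K + 1) → ℝ := Pi.single 0 u - Pi.single (Fin.last K) v

def hscMinimizer (K : ℕ) (u v : ℝ) : Fin (K + 1) → ℝ := BK K *ᵥ endLoad K u v

lemma MK_mulVec_hscMinimizer (K : ℕ) (u v : ℝ) :
    MK (K + 1) *ᵥ hscMinimizer (K + 1) u v = endLoad (K + 1) u v := by
  rw [hscMinimizer, mulVec_mulVec, MK_mul_BK, one_mulVec]

lemma hscMinimizer_apply (K : ℕ) (u v : ℝ) (i : Fin (K + 1)) :
    hscMinimizer K u v i = BK K i 0 * u - BK K i (Fin.last K) * v := by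
  simp [hscMinimizer, endLoad, mulVec_sub, mulVec_single, mul_comm]

lemma hsc_toLp (K : ℕ) (u v : ℝ) (w : Fin (K + 2) → ℝ) :
    hsc (K + 1) u v (WithLp.toLp 2 w) = w ⬝ᵥ MK (K + 1) *ᵥ w / 2 - endLoad (K + 1) u v ⬝ᵥ w := by
  rw [hsc, EuclideanSpace.real_norm_sq_eq, dotProduct_MK_mulVec, endLoad, sub_dotProduct,
    single_dotProduct, single_dotProduct]
  simp only [dotProduct, pathDiff_mulVec, sq]
  push_cast
  field_simp
  ring

def yStar (K T : ℕ) (x : EV (T + 2)) : EY K T :=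
  WithLp.toLp 2 fun p => hscMinimizer K (x p.1.castSucc) (x p.1.succ) p.2

lemma gbar_sub_gbar_yStar (K T : ℕ) (x z : EV (T + 2)) (y : EY (K + 1) T) :
    gbar (K + 1) T x z y - gbar (K + 1) T x (((K + 2 : ℝ)) ^ 2 • x) (yStar (K + 1) T x)
      = ‖z - ((K + 2 : ℝ)) ^ 2 • x‖ ^ 2 / (2 * ((K + 2 : ℝ)) ^ 2)
        + ∑ i : Fin (T + 1),
            ((fun j => y (i, j)) - hscMinimizer (K + 1) (x i.castSucc) (x i.succ)) ⬝ᵥ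
              MK (K + 1) *ᵥ
                ((fun j => y (i, j)) - hscMinimizer (K + 1) (x i.castSucc) (x i.succ)) / 2 := by
  have hc : ((K + 2 : ℝ)) ^ 2 ≠ 0 := by positivity
  have hz := norm_sq_div_sub_inner_eq_add hc x z
  have hy (i : Fin (T + 1)) := quadratic_eq_add_of_mulVec_eq (isSymm_MK K)
    (MK_mulVec_hscMinimizer K (x i.castSucc) (x i.succ)) (fun j => y (i, j))
  simp only [gbar, hsc_toLp, yStar, PiLp.toLp_apply] at hz hy ⊢
  rw [sum_congr rfl fun i _ => hy i, sum_add_distrib]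
  push_cast at hz ⊢
  linear_combination hz

lemma eq_of_gbar_le_gbar_yStar (K T : ℕ) {x z : EV (T + 2)} {y : EY (K + 1) T}
    (h : gbar (K + 1) T x z y ≤ gbar (K + 1) T x (((K + 2 : ℝ)) ^ 2 • x) (yStar (K + 1) T x)) :
    z = ((K + 2 : ℝ)) ^ 2 • x ∧ y = yStar (K + 1) T x := by
  have hsub := gbar_sub_gbar_yStar K T x z y
  set d : Fin (T + 1) → Fin (K + 2) → ℝ :=
    fun i => (fun j => y (i, j)) - hscMinimizer (K + 1) (x i.castSucc) (x i.succ)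
  have hq (i) : 0 ≤ d i ⬝ᵥ MK (K + 1) *ᵥ d i / 2 := by
    have := (posDef_MK K).posSemidef.dotProduct_mulVec_nonneg (d i)
    simp only [star_trivial] at this
    positivity
  have hz0 : ‖z - ((K + 2 : ℝ)) ^ 2 • x‖ ^ 2 / (2 * ((K + 2 : ℝ)) ^ 2) = 0 := by
    linarith [sum_nonneg fun i (_ : i ∈ univ) => hq i,
      show 0 ≤ ‖z - ((K + 2 : ℝ)) ^ 2 • x‖ ^ 2 / (2 * ((K + 2 : ℝ)) ^ 2) by positivity]
  have hy0 : ∑ i, d i ⬝ᵥ MK (K + 1) *ᵥ d i / 2 = 0 := by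
    linarith [sum_nonneg fun i (_ : i ∈ univ) => hq i]
  have hc : ((K + 2 : ℝ)) ≠ 0 := by positivity
  refine ⟨by simpa [sub_eq_zero, hc] using hz0, ?_⟩
  have hdi (i) : d i = 0 := by
    by_contra hne
    have hpos := (posDef_MK K).dotProduct_mulVec_pos hne
    have := (sum_eq_zero_iff_of_nonneg fun i _ => hq i).mp hy0 i (mem_univ i)
    simp only [star_trivial] at hpos
    linarith
  ext ⟨i, j⟩
  simpa [d, yStar, sub_eq_zero] using congrFun (hdi i) j

lemma coupling_hscMinimizer (K : ℕ) (u v : ℝ) :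
    aK (K + 1) / 2 * ((((K + 2 : ℝ)) ^ 2 * u) ^ 2 + (((K + 2 : ℝ)) ^ 2 * v) ^ 2)
      + bK (K + 1) / 2 * (((K + 2 : ℝ)) ^ 2 * u * hscMinimizer (K + 1) u v 0
        - ((K + 2 : ℝ)) ^ 2 * v * hscMinimizer (K + 1) u v (Fin.last (K + 1)))
      = ((K + 2 : ℝ)) ^ 3 / 2 * (v - u) ^ 2 := by
  have hLL : BK (K + 1) (Fin.last (K + 1)) (Fin.last (K + 1)) = BK (K + 1) 0 0 := by
    simpa using BK_rev (K + 1) 0 0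
  have hq := BK_zero_last_ne_zero K
  rw [hscMinimizer_apply, hscMinimizer_apply, BK_comm K (Fin.last _) 0, hLL, aK, bK]
  push_cast
  field_simp
  ring

lemma hfun_yStar (K T : ℕ) (x : EV (T + 2)) :
    hfun (K + 1) T (((K + 2 : ℝ)) ^ 2 • x) (yStar (K + 1) T x)
      = ((K + 2 : ℝ)) ^ 3 / 2 * ∑ i : Fin (T + 1), (x i.succ - x i.castSucc) ^ 2 := by
  simp only [hfun, PiLp.smul_apply, smul_eq_mul, yStar, PiLp.toLp_apply, mul_sum]
  exact sum_congr rfl fun i _ => coupling_hscMinimizer K _ _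

lemma fbar_yStar (K T : ℕ) (ν r : ℝ) (x : EV (T + 2)) :
    fbar (K + 1) T ν r (((K + 2 : ℝ)) ^ 2 • x) (yStar (K + 1) T x)
      = fnc T ν r (((K + 2 : ℝ)) ^ ((3 : ℝ) / 2) • x) := by
  set s := √((K + 2 : ℝ))
  have hs : s ^ 2 = K + 2 := Real.sq_sqrt (by positivity)
  have hs0 : s ≠ 0 := by positivity
  have hpow : ((K + 2 : ℝ)) ^ ((3 : ℝ) / 2) = (K + 2) * s := by
    rw [show (3 : ℝ) / 2 = 1 + 1 / 2 by norm_num, Real.rpow_add (by positivity), Real.rpow_one,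
      ← Real.sqrt_eq_rpow]
  have hdiv (a : ℝ) : ((K + 2 : ℝ)) ^ 2 * a / √(((K + 1 : ℕ) : ℝ) + 1) = (K + 2) * s * a := by
    rw [show (((K + 1 : ℕ) : ℝ) + 1) = K + 2 by push_cast; ring, div_eq_iff hs0]
    linear_combination (-(K + 2) * a) * hs
  have hchain : ((K + 2 : ℝ)) ^ 3 / 2 * ∑ i : Fin (T + 1), (x i.succ - x i.castSucc) ^ 2
      = 1 / 2 * ∑ i : Fin (T + 1), ((K + 2) * s * x i.succ - (K + 2) * s * x i.castSucc) ^ 2 := by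
    rw [mul_sum, mul_sum]
    exact sum_congr rfl fun i _ => by
      linear_combination (-(K + 2) ^ 2 * (x i.succ - x i.castSucc) ^ 2 / 2) * hs
  simp only [fbar, fnc, hfun_yStar, PiLp.smul_apply, smul_eq_mul, hpow, hdiv, hchain]
  ring

theorem hyperobjective_identity_general (K' T' : ℕ) (ν r : ℝ)
    (zst : EV (T' + 2) → EV (T' + 2)) (yst : EV (T' + 2) → EY (K' + 9) T')
    (hmin : ∀ (x z : EV (T' + 2)) (y : EY (K' + 9) T'),
      gbar (K' + 9) T' x (zst x) (yst x) ≤ gbar (K' + 9) T' x z y) :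
    ∀ x : EV (T' + 2),
      fbar (K' + 9) T' ν r (zst x) (yst x)
        = fnc T' ν r (((K' + 10 : ℝ)) ^ ((3 : ℝ) / 2) • x) := by
  intro x
  obtain ⟨hz, hy⟩ := eq_of_gbar_le_gbar_yStar (K' + 8) T' (hmin x _ _)
  have hN : (((K' + 8 : ℕ) : ℝ) + 2) = K' + 10 := by push_cast; ring
  rw [hz, hy, fbar_yStar, hN]

/-- **Hyper-objective identity for the NC-SC hard instance**: for `K ≥ 10`
(here `K = K'+10`), `T ≥ 2` (here `T = T'+2`), `ν ∈ (0,1]`, `r ≥ 1`, and the unique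
lower-level minimizer `(z*(x), y*(x))` of `(z,y) ↦ ḡ^{sc}(x,z,y)`, one has
`f̄^{nc-sc}(x, z*(x), y*(x)) = f̄^{nc}_{ν,r}(K^{3/2} x)` for every `x`. -/
theorem hyperobjective_identity (K' T' : ℕ) (ν r : ℝ)
    (hν0 : 0 < ν) (hν1 : ν ≤ 1) (hr : 1 ≤ r)
    (zst : EV (T' + 2) → EV (T' + 2)) (yst : EV (T' + 2) → EY (K' + 9) T')
    (hmin : ∀ (x z : EV (T' + 2)) (y : EY (K' + 9) T'),
      gbar (K' + 9) T' x (zst x) (yst x) ≤ gbar (K' + 9) T' x z y) :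
    ∀ x : EV (T' + 2),
      fbar (K' + 9) T' ν r (zst x) (yst x)
        = fnc T' ν r (((K' + 10 : ℝ)) ^ ((3 : ℝ) / 2) • x) :=
  hyperobjective_identity_general K' T' ν r zst yst hmin
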